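/- Let A=(a,b) be a conjugal pair with respect to a set X̃, with a,b in the group generated by an independent set Q̃, and let o be a Pauli operator in G̃_Q̃(a) ∪ G̃_Q̃(b). Then there exists a pair B=(c,d) such that c,d lie in the group generated by Q̃, o ∈ G̃_Q̃(c), o ∉ G̃_Q̃(d), (c,d) is a conjugal pair with respect to (X̃\{a,b})∪{c,d}, and the groups generated by {c,d} and {a,b} are equal. -/
import Mathlib


/-- Pauli operators on `n` qubits modulo phases, encoded symplectically:
each qubit carries an (X-part, Z-part) pair in `ZMod 2`. Multiplication is addition. -/
abbrev Pauli (n : ℕ) : Type := Fin n → ZMod 2 × ZMod 2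

namespace Pauli

/-- The symplectic form encoding commutation: `0` iff the operators commute. -/
def sform {n : ℕ} (a b : Pauli n) : ZMod 2 :=
  ∑ i, ((a i).1 * (b i).2 + (a i).2 * (b i).1)

/-- Two Pauli operators commute. -/
def PComm {n : ℕ} (a b : Pauli n) : Prop := sform a b = 0

/-- The weight of a Pauli operator: number of qubits on which it acts non-trivially. -/
def weight {n : ℕ} (a : Pauli n) : ℕ :=
  (Finset.univ.filter fun i => a i ≠ 0).card

/-- `(a,b)` is a conjugal pair in relation to the set `X`: `a` and `b` anti-commute,
and each commutes with every member of `X` other than its partner. -/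
def ConjugalPair {n : ℕ} (a b : Pauli n) (X : Set (Pauli n)) : Prop :=
  ¬ PComm a b ∧ (∀ x ∈ X, x ≠ b → PComm a x) ∧ (∀ x ∈ X, x ≠ a → PComm b x)

/-- `e` is an undetectable error with respect to `S` acting on `l`:
it commutes with all of `S` and anti-commutes with `l`. -/
def UndetError {n : ℕ} (S : Set (Pauli n)) (l e : Pauli n) : Prop :=
  (∀ s ∈ S, PComm e s) ∧ ¬ PComm e l

/-- `ω S l`: minimum weight of an undetectable error w.r.t. `S` acting on `l`. -/
noncomputable def ω {n : ℕ} (S : Set (Pauli n)) (l : Pauli n) : ℕ :=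
  sInf (weight '' {e | UndetError S l e})

/-- Single-qubit Pauli X on qubit `k`. -/
def Xk {n : ℕ} (k : Fin n) : Pauli n := fun i => if i = k then (1, 0) else 0

/-- Single-qubit Pauli Z on qubit `k`. -/
def Zk {n : ℕ} (k : Fin n) : Pauli n := fun i => if i = k then (0, 1) else 0

/-- `Pk k false = X_k`, `Pk k true = Z_k`. -/
def Pk {n : ℕ} (k : Fin n) (p : Bool) : Pauli n := if p then Zk k else Xk k

/-- A finite set of Pauli operators is independent if no member is a product of the others. -/
def IndepSet {n : ℕ} (T : Finset (Pauli n)) : Prop :=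
  ∀ t ∈ T, t ∉ AddSubgroup.closure ((T.erase t : Finset (Pauli n)) : Set (Pauli n))

/-- `O` is an unimprovable set with respect to `S`. -/
def Unimprovable {n : ℕ} (S : Set (Pauli n)) (O : Finset (Pauli n)) : Prop :=
  ∀ X ⊆ O, ∀ h : X.Nonempty, ω S (∑ x ∈ X, x) = X.inf' h (fun x => ω S x)

/-- The unimprovable set `O` extends to `Q` (with respect to `S`). -/
def ExtendsTo {n : ℕ} (S : Set (Pauli n)) (O Q : Finset (Pauli n)) : Prop :=
  ∀ R ⊆ O ∪ Q, ∀ h : (R ∩ O).Nonempty,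
    ω S (∑ x ∈ R, x) ≤ (R ∩ O).inf' h (fun x => ω S x)

end Pauli

lemma Pauli.add_self' {n : ℕ} (x : Pauli n) : x + x = 0 := by
  funext i
  have : ∀ y : ZMod 2, y + y = 0 := by decide
  exact Prod.ext (this _) (this _)

lemma Pauli.sform_self {n : ℕ} (a : Pauli n) : Pauli.sform a a = 0 := by
  apply Finset.sum_eq_zero
  intro i _
  rw [mul_comm]
  have : ∀ y : ZMod 2, y + y = 0 := by decide
  exact this _

lemma Pauli.sform_add_left {n : ℕ} (a b c : Pauli n) :
    Pauli.sform (a + b) c = Pauli.sform a c + Pauli.sform b c := by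
  unfold Pauli.sform
  rw [← Finset.sum_add_distrib]
  apply Finset.sum_congr rfl
  intro i _
  simp [Pi.add_apply]
  ring

lemma Pauli.sform_comm {n : ℕ} (a b : Pauli n) :
    Pauli.sform a b = Pauli.sform b a := by
  apply Finset.sum_congr rfl
  intro i _
  ring

lemma Pauli.sform_add_right {n : ℕ} (a b c : Pauli n) :
    Pauli.sform a (b + c) = Pauli.sform a b + Pauli.sform a c := by
  rw [Pauli.sform_comm, Pauli.sform_add_left, Pauli.sform_comm b, Pauli.sform_comm c]

lemma conj_transfer {n : ℕ} {a b : Pauli n} {X : Set (Pauli n)}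
    (h : Pauli.ConjugalPair a b X) (c d : Pauli n)
    (hc : ∀ x, Pauli.PComm a x → Pauli.PComm b x → Pauli.PComm c x)
    (hd : ∀ x, Pauli.PComm a x → Pauli.PComm b x → Pauli.PComm d x)
    (hcd : ¬ Pauli.PComm c d) :
    Pauli.ConjugalPair c d ((X \ {a, b}) ∪ {c, d}) := by
  have hab : a ≠ b := by
    intro e; exact h.1 (e ▸ Pauli.sform_self a)
  have hmem : ∀ x ∈ X \ ({a, b} : Set (Pauli n)),
      Pauli.PComm a x ∧ Pauli.PComm b x := by
    rintro x ⟨hx, hx2⟩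
    simp only [Set.mem_insert_iff, Set.mem_singleton_iff, not_or] at hx2
    exact ⟨h.2.1 x hx hx2.2, h.2.2 x hx hx2.1⟩
  refine ⟨hcd, ?_, ?_⟩
  · rintro x (hx | hx) hne
    · exact hc x (hmem x hx).1 (hmem x hx).2
    · rcases hx with hx | hx
      · exact hx ▸ Pauli.sform_self c
      · exact absurd hx hne
  · rintro x (hx | hx) hne
    · exact hd x (hmem x hx).1 (hmem x hx).2
    · rcases hx with hx | hx
      · exact absurd hx hne
      · exact hx ▸ Pauli.sform_self d

/-- Single-pair rearrangement.  `Fa`/`Fb` are the (unique, by independence of `Q`)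
sets of `Q`-generators of `a`/`b`; likewise `Fc`/`Fd` for the new pair `(c,d)`. -/
theorem stmt14 {n : ℕ} (Q : Finset (Pauli n)) (hQ : Pauli.IndepSet Q)
    (X : Set (Pauli n)) (a b o : Pauli n) (Fa Fb : Finset (Pauli n))
    (hFa : Fa ⊆ Q) (hFb : Fb ⊆ Q) (hsa : (∑ x ∈ Fa, x) = a) (hsb : (∑ x ∈ Fb, x) = b)
    (hconj : Pauli.ConjugalPair a b X) (ho : o ∈ Fa ∪ Fb) :
    ∃ (c d : Pauli n) (Fc Fd : Finset (Pauli n)),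
      Fc ⊆ Q ∧ Fd ⊆ Q ∧ (∑ x ∈ Fc, x) = c ∧ (∑ x ∈ Fd, x) = d ∧
      o ∈ Fc ∧ o ∉ Fd ∧
      Pauli.ConjugalPair c d ((X \ {a, b}) ∪ {c, d}) ∧
      AddSubgroup.closure ({c, d} : Set (Pauli n)) =
        AddSubgroup.closure ({a, b} : Set (Pauli n)) := by
  classical
  by_cases hoa : o ∈ Fa
  · by_cases hob : o ∈ Fb
    · -- c = a, d = a + b, Fd = symmetric difference
      refine ⟨a, a + b, Fa, symmDiff Fa Fb, hFa, ?_, hsa, ?_, hoa, ?_, ?_, ?_⟩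
      · intro x hx
        rcases Finset.mem_symmDiff.mp hx with ⟨h1, _⟩ | ⟨h1, _⟩
        · exact hFa h1
        · exact hFb h1
      · -- sum over symmDiff = a + b
        have hsub : Fa ∩ Fb ⊆ Fa := Finset.inter_subset_left
        have hsub' : Fa ∩ Fb ⊆ Fb := Finset.inter_subset_right
        have h1 : ∑ x ∈ Fa \ (Fa ∩ Fb), x + ∑ x ∈ Fa ∩ Fb, x = ∑ x ∈ Fa, x :=
          Finset.sum_sdiff hsub
        have h2 : ∑ x ∈ Fb \ (Fa ∩ Fb), x + ∑ x ∈ Fa ∩ Fb, x = ∑ x ∈ Fb, x :=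
          Finset.sum_sdiff hsub'
        have hd1 : Fa \ (Fa ∩ Fb) = Fa \ Fb := Finset.sdiff_inter_self_left Fa Fb
        have hd2 : Fb \ (Fa ∩ Fb) = Fb \ Fa := by
          rw [Finset.inter_comm]; exact Finset.sdiff_inter_self_left Fb Fa
        have hdisj : Disjoint (Fa \ Fb) (Fb \ Fa) := disjoint_sdiff_sdiff
        have hsymm : symmDiff Fa Fb = (Fa \ Fb) ∪ (Fb \ Fa) := symmDiff_def Fa Fb
        rw [hsymm, Finset.sum_union hdisj, ← hd1, ← hd2]
        have := Pauli.add_self' (∑ x ∈ Fa ∩ Fb, x)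
        rw [← hsa, ← hsb, ← h1, ← h2]
        abel_nf
        rw [show (2 : ℤ) • (∑ x ∈ Fa ∩ Fb, x) = ∑ x ∈ Fa ∩ Fb, x + ∑ x ∈ Fa ∩ Fb, x by
          rw [two_zsmul]]
        rw [this, add_zero]
      · intro h
        rcases Finset.mem_symmDiff.mp h with ⟨_, h2⟩ | ⟨_, h2⟩
        · exact h2 hob
        · exact h2 hoa
      · apply conj_transfer hconj
        · exact fun x h1 _ => h1
        · intro x h1 h2
          unfold Pauli.PComm at *
          rw [Pauli.sform_add_left, h1, h2, add_zero]
        · intro h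
          unfold Pauli.PComm at h
          rw [Pauli.sform_add_right, Pauli.sform_self, zero_add] at h
          exact hconj.1 h
      · apply le_antisymm
        · rw [AddSubgroup.closure_le]
          rintro x (rfl | rfl)
          · exact AddSubgroup.subset_closure (Set.mem_insert _ _)
          · exact add_mem
              (AddSubgroup.subset_closure (Set.mem_insert _ _))
              (AddSubgroup.subset_closure (Set.mem_insert_of_mem _ rfl))
        · rw [AddSubgroup.closure_le]
          rintro x (rfl | rfl)
          · exact AddSubgroup.subset_closure (Set.mem_insert _ _)
          · have hm : a + x ∈ AddSubgroup.closure ({a, a + x} : Set (Pauli n)) :=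
              AddSubgroup.subset_closure (Set.mem_insert_of_mem _ rfl)
            have ha : a ∈ AddSubgroup.closure ({a, a + x} : Set (Pauli n)) :=
              AddSubgroup.subset_closure (Set.mem_insert _ _)
            have := add_mem ha hm
            rwa [← add_assoc, Pauli.add_self' a, zero_add] at this
    · refine ⟨a, b, Fa, Fb, hFa, hFb, hsa, hsb, hoa, hob, ?_, rfl⟩
      apply conj_transfer hconj
      · exact fun x h1 _ => h1
      · exact fun x _ h2 => h2
      · exact hconj.1
  · have hob : o ∈ Fb := by
      rcases Finset.mem_union.mp ho with h | h
      · exact absurd h hoa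
      · exact h
    refine ⟨b, a, Fb, Fa, hFb, hFa, hsb, hsa, hob, hoa, ?_, by rw [Set.pair_comm]⟩
    have hX : (X \ {a, b}) = (X \ {b, a}) := by rw [Set.pair_comm]
    rw [hX]
    have hba : ¬ Pauli.PComm b a := by
      intro h
      apply hconj.1
      unfold Pauli.PComm at *
      rw [Pauli.sform_comm]; exact h
    apply conj_transfer ⟨hba, hconj.2.2, hconj.2.1⟩
    · exact fun x h1 _ => h1
    · exact fun x _ h2 => h2
    · exact hba
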